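/- arXiv:2401.14929 — 4 statements merged into one kernel-verified Lean document; each statement's English description precedes it below -/
import Mathlib

section
/- Let G be a compact topological group with Haar probability measure μ, and let V be a real Banach space on which G acts continuously by linear isometries, written (s, v) ↦ s • v (jointly continuous, each s • (−) a linear isometry). For a continuous map β : G × G → V define its coboundary δβ : G × G × G → V by δβ(s,t,u) := s • β(t,u) − β(st, u) + β(s, tu) − β(s,t), and for a continuous map α : G → V define δα : G × G → V by δα(s,t) := s • α(t) − α(st) + α(s). Define α(t) := −∫_G v • β(v⁻¹, t) dμ(v) (a Bochner integral). Then α is continuous and for all s, t ∈ G, δα(s,t) + β(s,t) = ∫_G v • (δβ)(v⁻¹, s, t) dμ(v). -/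
/-!
Expanding `v • δβ(v⁻¹, s, t)` gives `β(s,t) - v • β(v⁻¹s, t) + v • β(v⁻¹, st) - v • β(v⁻¹, s)`,
which can be integrated term by term since everything is continuous on the compact group `G`.
The constant term integrates to `β(s,t)` because `μ` is a probability measure, and the
substitution `v ↦ s v`, allowed by left invariance of `μ`, turns `s • α(t)` into
`-∫ v • β(v⁻¹s, t) dμ(v)`. Continuity of `α` is continuity of a parametric integral of a jointly
continuous function over a compact space.
-/

open MeasureTheory

section

variable {G : Type*} [Group G] {V : Type*} [NormedAddCommGroup V] [NormedSpace ℝ V]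

lemma MonoidHom.apply_apply_inv (σ : G →* (V ≃ₗᵢ[ℝ] V)) (v : G) (x : V) :
    σ v (σ v⁻¹ x) = x := by
  rw [map_inv, LinearIsometryEquiv.coe_inv, LinearIsometryEquiv.apply_symm_apply]

lemma MonoidHom.apply_integral_apply_inv [MeasurableSpace G] [MeasurableMul G] (μ : Measure G)
    [μ.IsMulLeftInvariant] (σ : G →* (V ≃ₗᵢ[ℝ] V)) (f : G → V) (s : G) :
    σ s (∫ v, σ v (f v⁻¹) ∂μ) = ∫ v, σ v (f (v⁻¹ * s)) ∂μ :=
  calc σ s (∫ v, σ v (f v⁻¹) ∂μ) = ∫ v, σ (s * v) (f ((s * v)⁻¹ * s)) ∂μ := by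
        simpa [mul_assoc] using
          ((σ s).toContinuousLinearEquiv.integral_comp_comm fun v ↦ σ v (f v⁻¹)).symm
    _ = ∫ v, σ v (f (v⁻¹ * s)) ∂μ := integral_mul_left_eq_self (fun w ↦ σ w (f (w⁻¹ * s))) s

end

/-- For a compact group `G` with Haar probability measure `μ` acting
continuously by linear isometries on a real Banach space `V`, and a continuous
`β : G × G → V`, the averaged cochain `α t := -∫ v, v • β (v⁻¹, t) dμ v` is continuous
and satisfies `δα (s,t) + β (s,t) = ∫ v, v • (δβ) (v⁻¹, s, t) dμ v`. -/
theorem averaging_identity {G : Type*} [Group G] [TopologicalSpace G] [IsTopologicalGroup G]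
    [CompactSpace G] [MeasurableSpace G] [BorelSpace G]
    (μ : Measure G) [μ.IsHaarMeasure] [IsProbabilityMeasure μ]
    {V : Type*} [NormedAddCommGroup V] [NormedSpace ℝ V] [CompleteSpace V]
    (σ : G →* (V ≃ₗᵢ[ℝ] V)) (hσ : Continuous fun p : G × V => σ p.1 p.2)
    (β : G → G → V) (hβ : Continuous fun p : G × G => β p.1 p.2)
    (α : G → V) (hα : ∀ t : G, α t = -∫ v : G, σ v (β v⁻¹ t) ∂μ) :
    Continuous α ∧
      ∀ s t : G,
        (σ s (α t) - α (s * t) + α s) + β s t =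
          ∫ v : G,
            σ v (σ v⁻¹ (β s t) - β (v⁻¹ * s) t + β v⁻¹ (s * t) - β v⁻¹ s) ∂μ := by
  refine ⟨?_, fun s t ↦ ?_⟩
  · have hβ' : Continuous fun p : G × G ↦ σ p.2 (β p.2⁻¹ p.1) :=
      hσ.comp (continuous_snd.prodMk (hβ.comp (continuous_snd.inv.prodMk continuous_fst)))
    rw [funext hα, ← continuousOn_univ]
    exact (continuousOn_integral_of_compact_support isCompact_univ hβ'.continuousOn
      (by simp)).neg
  · have hint : ∀ {g h : G → G}, Continuous g → Continuous h →
        Integrable (fun v ↦ σ v (β (g v) (h v))) μ := fun hg hh ↦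
      (hσ.comp (continuous_id.prodMk (hβ.comp (hg.prodMk hh)))).integrable_of_hasCompactSupport
        (.of_compactSpace _)
    have hc : Integrable (fun _ : G ↦ β s t) μ := integrable_const _
    have hβ₁ := hint (g := (·⁻¹ * s)) (h := fun _ ↦ t) (by fun_prop) continuous_const
    have hβ₂ := hint (g := (·⁻¹)) (h := fun _ ↦ s * t) continuous_inv continuous_const
    have hβ₃ := hint (g := (·⁻¹)) (h := fun _ ↦ s) continuous_inv continuous_const
    rw [hα, hα, hα, map_neg, σ.apply_integral_apply_inv μ (β · t)]
    simp only [σ.apply_apply_inv, map_sub, map_add]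
    rw [integral_sub (by exact (hc.sub hβ₁).add hβ₂) hβ₃, integral_add (by exact hc.sub hβ₁) hβ₂,
      integral_sub hc hβ₁, integral_const, probReal_univ, one_smul]
    abel
end

section
/- Let G be a compact topological group with Haar probability measure μ, and let V be a real Banach space on which G acts continuously by linear isometries, written (s, v) ↦ s • v. For a continuous β : G × G → V define δβ(s,t,u) := s • β(t,u) − β(st,u) + β(s,tu) − β(s,t), and set α(t) := −∫_G v • β(v⁻¹, t) dμ(v). Then sup_{s,t ∈ G} ‖s • α(t) − α(st) + α(s) + β(s,t)‖ ≤ sup_{s,t,u ∈ G} ‖δβ(s,t,u)‖. In particular, if sup ‖δβ‖ ≤ ε then β is uniformly within ε of the coboundary −δα. -/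
open MeasureTheory

/-! The cochain `α` averages `β` over `G`, so that `δα + β` is the average over `v` of
`v • δβ(v⁻¹, s, t)`: the substitution `v ↦ s v`, allowed by left invariance of `μ`, turns the term
`v • β(v⁻¹ s, t)` into `s • (v • β(v⁻¹, t))`. The average of vectors of norm at most `sup ‖δβ‖`
against a probability measure has norm at most `sup ‖δβ‖`. -/

section Cochains

variable {G V : Type*} [Group G] [NormedAddCommGroup V] [NormedSpace ℝ V]
  (σ : G →* (V ≃ₗᵢ[ℝ] V))

def coboundary₁ (α : G → V) (s t : G) : V :=
  σ s (α t) - α (s * t) + α s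

def coboundary₂ (β : G → G → V) (s t u : G) : V :=
  σ s (β t u) - β (s * t) u + β s (t * u) - β s t

noncomputable def averagedCochain [MeasurableSpace G] (μ : Measure G) (β : G → G → V) (t : G) :
    V :=
  -∫ v, σ v (β v⁻¹ t) ∂μ

theorem integral_apply_comp_inv_mul [MeasurableSpace G] [MeasurableMul G] (μ : Measure G)
    [μ.IsMulLeftInvariant] (f : G → V) (s : G) :
    ∫ v, σ v (f (v⁻¹ * s)) ∂μ = σ s (∫ v, σ v (f v⁻¹) ∂μ) := by
  have h := (σ s).toContinuousLinearEquiv.integral_comp_comm (μ := μ) fun v => σ v (f v⁻¹)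
  simp only [LinearIsometryEquiv.coe_toContinuousLinearEquiv] at h
  rw [← h, ← integral_mul_left_eq_self _ s]
  simp [mul_inv_rev, map_mul]

variable [TopologicalSpace G] {σ}

theorem Continuous.action_apply (hσ : Continuous fun p : G × V => σ p.1 p.2) {X : Type*}
    [TopologicalSpace X] {g : X → G} {f : X → V} (hg : Continuous g) (hf : Continuous f) :
    Continuous fun x => σ (g x) (f x) :=
  hσ.comp (hg.prodMk hf)

variable [IsTopologicalGroup G] {β : G → G → V}

theorem continuous_coboundary₂ (hσ : Continuous fun p : G × V => σ p.1 p.2)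
    (hβ : Continuous fun p : G × G => β p.1 p.2) :
    Continuous fun q : G × G × G => coboundary₂ σ β q.1 q.2.1 q.2.2 := by
  have hβ' {f g : G × G × G → G} (hf : Continuous f) (hg : Continuous g) :
      Continuous fun q => β (f q) (g q) :=
    hβ.comp (hf.prodMk hg)
  unfold coboundary₂
  refine ((hσ.action_apply ?_ (hβ' ?_ ?_)).sub (hβ' ?_ ?_)).add (hβ' ?_ ?_) |>.sub (hβ' ?_ ?_) <;>
    fun_prop

variable [CompactSpace G] [MeasurableSpace G] [BorelSpace G] [CompleteSpace V]
  (μ : Measure G) [μ.IsMulLeftInvariant] [IsProbabilityMeasure μ]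

theorem coboundary₁_averagedCochain_add_eq_integral
    (hσ : Continuous fun p : G × V => σ p.1 p.2) (hβ : Continuous fun p : G × G => β p.1 p.2)
    (s t : G) :
    coboundary₁ σ (averagedCochain σ μ β) s t + β s t =
      ∫ v, σ v (coboundary₂ σ β v⁻¹ s t) ∂μ := by
  have integrable {f : G → V} (hf : Continuous f) : Integrable f μ :=
    hf.integrable_of_hasCompactSupport (.of_compactSpace f)
  have hβ' {f : G → G} (hf : Continuous f) (u : G) :
      Integrable (fun v => σ v (β (f v) u)) μ :=
    integrable (hσ.action_apply continuous_id (hβ.comp (hf.prodMk continuous_const)))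
  have h₁ : Integrable (fun v => σ v (β (v⁻¹ * s) t)) μ := hβ' (by fun_prop) t
  have h₂ : Integrable (fun v => σ v (β v⁻¹ (s * t))) μ := hβ' continuous_inv (s * t)
  have h₃ : Integrable (fun v => σ v (β v⁻¹ s)) μ := hβ' continuous_inv s
  have hσσ (v : G) (x : V) : σ v (σ v⁻¹ x) = x := by
    simp [LinearIsometryEquiv.coe_inv]
  simp only [coboundary₂, map_sub, map_add, hσσ]
  have h₀ : Integrable (fun v => β s t - σ v (β (v⁻¹ * s) t)) μ := (integrable_const _).sub h₁
  rw [integral_sub ?_ h₃, integral_add h₀ h₂, integral_sub (integrable_const _) h₁,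
    integral_const, integral_apply_comp_inv_mul σ μ (fun w => β w t)]
  · simp only [coboundary₁, averagedCochain, map_neg, probReal_univ, one_smul]
    abel
  · exact h₀.add h₂

end Cochains

/-- With `G` a compact group with Haar probability measure acting
continuously by linear isometries on a real Banach space `V`, for continuous
`β : G × G → V` and `α t := -∫ v, v • β (v⁻¹, t) dμ v`, we have
`sup_{s,t} ‖s • α t - α (st) + α s + β (s,t)‖ ≤ sup_{s,t,u} ‖δβ (s,t,u)‖`. -/
theorem averaging_estimate {G : Type*} [Group G] [TopologicalSpace G] [IsTopologicalGroup G]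
    [CompactSpace G] [MeasurableSpace G] [BorelSpace G]
    (μ : Measure G) [μ.IsHaarMeasure] [IsProbabilityMeasure μ]
    {V : Type*} [NormedAddCommGroup V] [NormedSpace ℝ V] [CompleteSpace V]
    (σ : G →* (V ≃ₗᵢ[ℝ] V)) (hσ : Continuous fun p : G × V => σ p.1 p.2)
    (β : G → G → V) (hβ : Continuous fun p : G × G => β p.1 p.2)
    (α : G → V) (hα : ∀ t : G, α t = -∫ v : G, σ v (β v⁻¹ t) ∂μ) :
    (⨆ p : G × G, ‖σ p.1 (α p.2) - α (p.1 * p.2) + α p.1 + β p.1 p.2‖) ≤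
      ⨆ q : G × G × G,
        ‖σ q.1 (β q.2.1 q.2.2) - β (q.1 * q.2.1) q.2.2 + β q.1 (q.2.1 * q.2.2)
          - β q.1 q.2.1‖ := by
  obtain rfl : α = averagedCochain σ μ β := funext hα
  have hbdd := (isCompact_range (continuous_coboundary₂ hσ hβ).norm).bddAbove
  refine ciSup_le fun ⟨s, t⟩ => ?_
  calc ‖coboundary₁ σ (averagedCochain σ μ β) s t + β s t‖
      = ‖∫ v, σ v (coboundary₂ σ β v⁻¹ s t) ∂μ‖ := by
        rw [coboundary₁_averagedCochain_add_eq_integral μ hσ hβ]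
    _ ≤ (⨆ q : G × G × G, ‖coboundary₂ σ β q.1 q.2.1 q.2.2‖) * μ.real Set.univ :=
        norm_integral_le_of_norm_le_const <| .of_forall fun v => by
          simpa only [LinearIsometryEquiv.norm_map] using le_ciSup hbdd (v⁻¹, s, t)
    _ = _ := by rw [probReal_univ, mul_one]; rfl
end

section
/- Let G be a compact topological group acting on a real unital Banach algebra A by isometric unital algebra automorphisms, with the action map G × A → A, (s, a) ↦ s • a, jointly continuous; this induces an action of G on the group Aˣ of invertible elements. For every M ≥ 1 and every δ > 0 there exists ε > 0 with the following property: for every continuous map ρ : G → Aˣ satisfying ‖ρ(s)‖ ≤ M and ‖ρ(s)⁻¹‖ ≤ M for all s ∈ G and sup_{s,t ∈ G} ‖ρ(s) · (s • ρ(t)) − ρ(st)‖ ≤ ε, there exists a continuous map ρ' : G → Aˣ that is a 1-cocycle, i.e. ρ'(st) = ρ'(s) · (s • ρ'(t)) for all s, t ∈ G, and satisfies sup_{s ∈ G} ‖ρ'(s) − ρ(s)‖ ≤ δ. -/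
/-!
Averaging an almost-cocycle `v` over Haar measure, `f s = ∫ v (s u) · s•(v u)⁻¹ du`, moves it by
at most (defect)·‖v⁻¹‖ and squares its defect: with `q s u = v (s u) · s•(v u)⁻¹` one has
`f s · s•(f t) - f (s t) = ∫ (f s - q s (t u)) · s•(q t u - v t) du`, and both factors are of the
size of the defect. Iterating, the defects decrease geometrically, the iterates converge
uniformly, and the limit is a continuous cocycle close to the original map, invertible because it
stays close to it.
-/

open MeasureTheory Filter Topology
open scoped Ring

section NormedRing

variable {R : Type*} [NormedRing R]

theorem isUnit_of_norm_sub_mul_lt_one [HasSummableGeomSeries R] (x : Rˣ) {y : R}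
    (h : ‖y - x‖ * ‖(↑x⁻¹ : R)‖ < 1) : IsUnit y := by
  have ht : ‖-(↑x⁻¹ * (y - x))‖ < 1 := by
    rw [norm_neg]
    exact (norm_mul_le _ _).trans_lt (by rwa [mul_comm])
  have hy : (x : R) * (1 - -(↑x⁻¹ * (y - x))) = y := by
    rw [sub_neg_eq_add, mul_add, mul_one, ← mul_assoc, Units.mul_inv, one_mul, add_sub_cancel]
  exact hy ▸ x.isUnit.mul (Units.oneSub _ ht).isUnit

theorem norm_ringInverse_le_two_mul [HasSummableGeomSeries R] (x : Rˣ) {y : R}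
    (h : ‖y - x‖ * ‖(↑x⁻¹ : R)‖ ≤ 1 / 2) : ‖y⁻¹ʳ‖ ≤ 2 * ‖(↑x⁻¹ : R)‖ := by
  obtain ⟨y, rfl⟩ := isUnit_of_norm_sub_mul_lt_one x (h.trans_lt (by norm_num))
  rw [Ring.inverse_unit]
  have hid : (↑y⁻¹ : R) = ↑x⁻¹ - ↑y⁻¹ * ((y : R) - x) * ↑x⁻¹ := by
    rw [mul_sub, sub_mul, Units.inv_mul, one_mul, mul_assoc _ (x : R), Units.mul_inv, mul_one,
      sub_sub_cancel]
  have hle : ‖(↑y⁻¹ : R)‖ ≤ ‖(↑x⁻¹ : R)‖ + ‖(↑y⁻¹ : R)‖ * (‖(y : R) - x‖ * ‖(↑x⁻¹ : R)‖) := by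
    calc ‖(↑y⁻¹ : R)‖ ≤ ‖(↑x⁻¹ : R)‖ + ‖↑y⁻¹ * ((y : R) - x) * ↑x⁻¹‖ :=
          (congrArg norm hid).trans_le (norm_sub_le _ _)
      _ ≤ _ := by
          rw [← mul_assoc]
          gcongr
          exact (norm_mul_le _ _).trans (by gcongr; exact norm_mul_le _ _)
  nlinarith [norm_nonneg (↑y⁻¹ : R)]

theorem Continuous.ringInverse [HasSummableGeomSeries R] {X : Type*} [TopologicalSpace X]
    {f : X → R} (hf : Continuous f) (hu : ∀ x, IsUnit (f x)) : Continuous fun x => (f x)⁻¹ʳ :=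
  continuous_iff_continuousAt.2 fun x =>
    ((hu x).unit_spec ▸ NormedRing.inverse_continuousAt (hu x).unit).comp hf.continuousAt

end NormedRing

theorem Continuous.integrable_of_compactSpace {X E : Type*} [TopologicalSpace X] [CompactSpace X]
    [MeasurableSpace X] [OpensMeasurableSpace X] {μ : Measure X} [IsFiniteMeasure μ]
    [NormedAddCommGroup E] {f : X → E} (hf : Continuous f) : Integrable f μ :=
  hf.integrable_of_hasCompactSupport (.of_compactSpace f)

theorem continuous_integral_of_continuous_uncurry {X Y E : Type*} [TopologicalSpace X]
    [TopologicalSpace Y] [CompactSpace Y] [MeasurableSpace Y] [OpensMeasurableSpace Y]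
    {μ : Measure Y} [IsFiniteMeasure μ] [NormedAddCommGroup E] [NormedSpace ℝ E]
    {f : X → Y → E} (hf : Continuous f.uncurry) : Continuous fun x => ∫ y, f x y ∂μ := by
  have := continuousOn_integral_bilinear_of_locally_integrable_of_compact_support
    (μ := μ) (ContinuousLinearMap.lsmul ℝ ℝ) (g := fun _ => (1 : ℝ)) (s := Set.univ)
    isCompact_univ hf.continuousOn (fun _ _ _ hy => absurd (Set.mem_univ _) hy)
    (integrableOn_const (by simp))
  simpa [continuousOn_univ] using this

theorem exists_tendstoUniformly_of_norm_sub_le_geometric {X E : Type*} [NormedAddCommGroup E]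
    [CompleteSpace E] {v : ℕ → X → E} {C r : ℝ} (hr₀ : 0 ≤ r) (hr₁ : r < 1)
    (hv : ∀ n x, ‖v (n + 1) x - v n x‖ ≤ C * r ^ n) :
    ∃ L : X → E, TendstoUniformly v L atTop ∧ ∀ x, ‖v 0 x - L x‖ ≤ C / (1 - r) := by
  have hdist : ∀ x n, dist (v n x) (v (n + 1) x) ≤ C * r ^ n := fun x n => by
    rw [dist_comm, dist_eq_norm]; exact hv n x
  choose L hL using fun x =>
    cauchySeq_tendsto_of_complete (cauchySeq_of_le_geometric r C hr₁ (hdist x))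
  have hbound : ∀ n x, dist (v n x) (L x) ≤ C * r ^ n / (1 - r) := fun n x =>
    dist_le_of_le_geometric_of_tendsto r C hr₁ (hdist x) (hL x) n
  refine ⟨L, ?_, fun x => by simpa [dist_eq_norm] using hbound 0 x⟩
  have hlim : Tendsto (fun n => C * r ^ n / (1 - r)) atTop (𝓝 0) := by
    simpa using ((tendsto_pow_atTop_nhds_zero_of_lt_one hr₀ hr₁).const_mul C).div_const (1 - r)
  rw [Metric.tendstoUniformly_iff]
  intro η hη
  filter_upwards [hlim.eventually (eventually_lt_nhds hη)] with n hn x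
  exact (dist_comm (L x) (v n x)).trans_le (hbound n x) |>.trans_lt hn

theorem exists_isProbabilityMeasure_isMulLeftInvariant (G : Type*) [Group G] [TopologicalSpace G]
    [IsTopologicalGroup G] [CompactSpace G] [MeasurableSpace G] [BorelSpace G] :
    ∃ μ : Measure G, IsProbabilityMeasure μ ∧ μ.IsMulLeftInvariant := by
  have : Nonempty G := ⟨1⟩
  refine ⟨Measure.haarMeasure ⊤, ⟨?_⟩, inferInstance⟩
  rw [← TopologicalSpace.PositiveCompacts.coe_top]
  exact Measure.haarMeasure_self

section Averaging

variable {G : Type*} [Group G] {A : Type*} [NormedRing A] [NormedAlgebra ℝ A]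
  (σ : G →* (A ≃ₐ[ℝ] A))

def IsAlmostCocycle (e : ℝ) (v : G → A) : Prop :=
  ∀ s t, ‖v s * σ s (v t) - v (s * t)‖ ≤ e

noncomputable def averageIntegrand (v : G → A) (s u : G) : A :=
  v (s * u) * σ s (v u)⁻¹ʳ

noncomputable def cocycleAverage [MeasurableSpace G] (μ : Measure G) (v : G → A) (s : G) : A :=
  ∫ u, averageIntegrand σ v s u ∂μ

variable {σ} {v : G → A}

theorem IsAlmostCocycle.mono {e e' : ℝ} (h : IsAlmostCocycle σ e v) (he : e ≤ e') :
    IsAlmostCocycle σ e' v :=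
  fun s t => (h s t).trans he

theorem sub_averageIntegrand {u : G} (hu : IsUnit (v u)) (s : G) :
    v s - averageIntegrand σ v s u = (v s * σ s (v u) - v (s * u)) * σ s (v u)⁻¹ʳ := by
  rw [sub_mul, mul_assoc, ← map_mul, Ring.mul_inverse_cancel _ hu, map_one, mul_one,
    averageIntegrand]

theorem norm_sub_averageIntegrand_le (hσn : ∀ s a, ‖σ s a‖ ≤ ‖a‖) {e B : ℝ} (he : 0 ≤ e)
    (hv : IsAlmostCocycle σ e v) (hu : ∀ u, IsUnit (v u)) (hB : ∀ u, ‖(v u)⁻¹ʳ‖ ≤ B) (s u : G) :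
    ‖v s - averageIntegrand σ v s u‖ ≤ e * B := by
  rw [sub_averageIntegrand (hu u)]
  exact (norm_mul_le _ _).trans (mul_le_mul (hv s u) ((hσn _ _).trans (hB u)) (norm_nonneg _) he)

theorem averageIntegrand_mul_act (hu : ∀ u, IsUnit (v u)) (s t u : G) :
    averageIntegrand σ v s (t * u) * σ s (averageIntegrand σ v t u)
      = averageIntegrand σ v (s * t) u := by
  simp only [averageIntegrand]
  rw [mul_assoc, ← map_mul, ← mul_assoc (v (t * u))⁻¹ʳ, Ring.inverse_mul_cancel _ (hu _), one_mul,
    ← AlgEquiv.mul_apply, ← map_mul, mul_assoc]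

variable [TopologicalSpace G] [IsTopologicalGroup G]

theorem continuous_averageIntegrand [CompleteSpace A] (hσ : Continuous fun p : G × A => σ p.1 p.2)
    (hvc : Continuous v) (hu : ∀ u, IsUnit (v u)) :
    Continuous (Function.uncurry (averageIntegrand σ v)) :=
  (hvc.comp (continuous_fst.mul continuous_snd)).mul
    (hσ.comp (continuous_fst.prodMk ((hvc.ringInverse hu).comp continuous_snd)))

variable [CompactSpace G] [CompleteSpace A] [MeasurableSpace G] [BorelSpace G]
  (μ : Measure G) [IsProbabilityMeasure μ]

theorem continuous_cocycleAverage (hσ : Continuous fun p : G × A => σ p.1 p.2)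
    (hvc : Continuous v) (hu : ∀ u, IsUnit (v u)) : Continuous (cocycleAverage σ μ v) :=
  continuous_integral_of_continuous_uncurry (continuous_averageIntegrand hσ hvc hu)

theorem norm_cocycleAverage_sub_le (hσn : ∀ s a, ‖σ s a‖ ≤ ‖a‖)
    (hσ : Continuous fun p : G × A => σ p.1 p.2) {e B : ℝ} (he : 0 ≤ e)
    (hvc : Continuous v) (hv : IsAlmostCocycle σ e v) (hu : ∀ u, IsUnit (v u))
    (hB : ∀ u, ‖(v u)⁻¹ʳ‖ ≤ B) (s : G) :
    ‖cocycleAverage σ μ v s - v s‖ ≤ e * B := by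
  have hq : Continuous (averageIntegrand σ v s) :=
    (continuous_averageIntegrand hσ hvc hu).comp (Continuous.prodMk_right s)
  have hint : cocycleAverage σ μ v s - v s = ∫ u, (averageIntegrand σ v s u - v s) ∂μ := by
    rw [integral_sub hq.integrable_of_compactSpace (integrable_const _), integral_const,
      probReal_univ, one_smul, cocycleAverage]
  rw [hint]
  refine (norm_integral_le_of_norm_le_const (Eventually.of_forall fun u => ?_)).trans_eq
    (by rw [probReal_univ, mul_one])
  rw [norm_sub_rev]
  exact norm_sub_averageIntegrand_le hσn he hv hu hB s u

variable [μ.IsMulLeftInvariant]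

/-- Both factors of the integrand are of the size of the defect of `v`, which is why one
averaging step squares the defect. -/
theorem cocycleAverage_mul_act_sub (hσ : Continuous fun p : G × A => σ p.1 p.2)
    (hvc : Continuous v) (hu : ∀ u, IsUnit (v u)) (s t : G) :
    cocycleAverage σ μ v s * σ s (cocycleAverage σ μ v t) - cocycleAverage σ μ v (s * t)
      = ∫ u, (cocycleAverage σ μ v s - averageIntegrand σ v s (t * u))
          * σ s (averageIntegrand σ v t u - v t) ∂μ := by
  have hq : ∀ s, Continuous (averageIntegrand σ v s) := fun s =>
    (continuous_averageIntegrand hσ hvc hu).comp (Continuous.prodMk_right s)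
  have hqt : Continuous fun u => averageIntegrand σ v s (t * u) :=
    (hq s).comp (continuous_const_mul t)
  have hσs : Continuous (σ s) := hσ.comp (Continuous.prodMk_right s)
  have hint : ∀ {g : G → A}, Continuous g → Integrable g μ := fun hg =>
    hg.integrable_of_compactSpace
  have hmean : ∫ u, (cocycleAverage σ μ v s - averageIntegrand σ v s (t * u)) ∂μ = 0 := by
    rw [integral_sub (integrable_const _) (hint hqt), integral_const, probReal_univ, one_smul,
      integral_mul_left_eq_self, cocycleAverage, sub_self]
  have hcomm : ∫ u, σ s (averageIntegrand σ v t u) ∂μ = σ s (cocycleAverage σ μ v t) :=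
    (⟨(σ s).toLinearMap, hσs⟩ : A →L[ℝ] A).integral_comp_comm (hint (hq t))
  calc _ = ∫ u, (cocycleAverage σ μ v s * σ s (averageIntegrand σ v t u)
          - averageIntegrand σ v (s * t) u) ∂μ := by
        rw [integral_sub (hint ?_) (hint (hq _)), integral_const_mul_of_integrable (hint ?_),
          hcomm]
        · rfl
        all_goals fun_prop
    _ = ∫ u, (cocycleAverage σ μ v s - averageIntegrand σ v s (t * u))
          * σ s (averageIntegrand σ v t u) ∂μ := by
        simp only [sub_mul, averageIntegrand_mul_act hu]
    _ = _ := by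
        simp only [map_sub, mul_sub]
        rw [integral_sub (hint ?_) (hint ?_), integral_mul_const_of_integrable (hint ?_), hmean,
          zero_mul, sub_zero]
        all_goals fun_prop

theorem isAlmostCocycle_cocycleAverage (hσn : ∀ s a, ‖σ s a‖ ≤ ‖a‖)
    (hσ : Continuous fun p : G × A => σ p.1 p.2) {e B : ℝ} (he : 0 ≤ e)
    (hvc : Continuous v) (hv : IsAlmostCocycle σ e v) (hu : ∀ u, IsUnit (v u))
    (hB : ∀ u, ‖(v u)⁻¹ʳ‖ ≤ B) :
    IsAlmostCocycle σ (2 * (e * B) ^ 2) (cocycleAverage σ μ v) := by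
  intro s t
  have hq := norm_sub_averageIntegrand_le hσn he hv hu hB
  have hf := norm_cocycleAverage_sub_le μ hσn hσ he hvc hv hu hB
  have heB : 0 ≤ e * B := (norm_nonneg _).trans (hf s)
  rw [cocycleAverage_mul_act_sub μ hσ hvc hu]
  refine (norm_integral_le_of_norm_le_const (Eventually.of_forall fun u => ?_)).trans_eq
    (by rw [probReal_univ, mul_one])
  have h₁ : ‖cocycleAverage σ μ v s - averageIntegrand σ v s (t * u)‖ ≤ 2 * (e * B) := by
    rw [two_mul, ← sub_add_sub_cancel _ (v s)]
    exact (norm_add_le _ _).trans (add_le_add (hf s) (hq s (t * u)))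
  have h₂ : ‖σ s (averageIntegrand σ v t u - v t)‖ ≤ e * B :=
    ((hσn _ _).trans_eq (norm_sub_rev _ _)).trans (hq t u)
  calc _ ≤ _ := norm_mul_le _ _
    _ ≤ 2 * (e * B) * (e * B) := mul_le_mul h₁ h₂ (norm_nonneg _) (by positivity)
    _ = _ := by ring

end Averaging

section Iteration

variable {G : Type*} [Group G] [TopologicalSpace G] [IsTopologicalGroup G] [CompactSpace G]
  [MeasurableSpace G] [BorelSpace G] {A : Type*} [NormedRing A] [CompleteSpace A]
  [NormedAlgebra ℝ A] {σ : G →* (A ≃ₐ[ℝ] A)} (μ : Measure G) [IsProbabilityMeasure μ]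
  [μ.IsMulLeftInvariant] {ρ : G → Aˣ} {M ε : ℝ}

/-- Within `4 M ε ≤ 1 / (4 M)` of `ρ` the inverses of `v` are bounded by `2 M`, so an averaging
step turns the defect `ε r` into `8 M² (ε r)² ≤ ε r / 2`; this is where `16 M² ε ≤ 1` comes from. -/
theorem cocycleAverage_step (hσn : ∀ s a, ‖σ s a‖ ≤ ‖a‖)
    (hσ : Continuous fun p : G × A => σ p.1 p.2) (hρM : ∀ s, ‖(↑(ρ s)⁻¹ : A)‖ ≤ M)
    (hε : 0 ≤ ε) (hεM : 16 * M ^ 2 * ε ≤ 1) {r : ℝ} (hr₀ : 0 ≤ r) (hr₁ : r ≤ 1) {v : G → A}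
    (hvc : Continuous v) (hvρ : ∀ s, ‖v s - ρ s‖ ≤ 4 * M * ε * (1 - r))
    (hv : IsAlmostCocycle σ (ε * r) v) :
    Continuous (cocycleAverage σ μ v) ∧ (∀ s, ‖cocycleAverage σ μ v s - v s‖ ≤ 2 * M * ε * r) ∧
      IsAlmostCocycle σ (ε * (r / 2)) (cocycleAverage σ μ v) := by
  have hM : 0 ≤ M := (norm_nonneg _).trans (hρM 1)
  have hnear : ∀ s, ‖v s - ρ s‖ * ‖(↑(ρ s)⁻¹ : A)‖ ≤ 1 / 4 := fun s =>
    calc _ ≤ 4 * M * ε * (1 - r) * M :=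
          mul_le_mul (hvρ s) (hρM s) (norm_nonneg _) ((norm_nonneg _).trans (hvρ s))
      _ ≤ 1 / 4 := by nlinarith [mul_nonneg (mul_nonneg hM hM) (mul_nonneg hε hr₀)]
  have hu : ∀ s, IsUnit (v s) := fun s =>
    isUnit_of_norm_sub_mul_lt_one (ρ s) ((hnear s).trans_lt (by norm_num))
  have hB : ∀ s, ‖(v s)⁻¹ʳ‖ ≤ 2 * M := fun s =>
    (norm_ringInverse_le_two_mul (ρ s) ((hnear s).trans (by norm_num))).trans (by linarith [hρM s])
  have her : 0 ≤ ε * r := mul_nonneg hε hr₀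
  refine ⟨continuous_cocycleAverage μ hσ hvc hu, fun s => ?_, ?_⟩
  · exact (norm_cocycleAverage_sub_le μ hσn hσ her hvc hv hu hB s).trans_eq (by ring)
  · refine (isAlmostCocycle_cocycleAverage μ hσn hσ her hvc hv hu hB).mono ?_
    have hr : 16 * M ^ 2 * ε * r ≤ 1 := by
      nlinarith [mul_le_mul_of_nonneg_left hr₁ (by positivity : 0 ≤ 16 * M ^ 2 * ε)]
    nlinarith [mul_le_mul_of_nonneg_left hr her]

theorem iterate_cocycleAverage_spec (hσn : ∀ s a, ‖σ s a‖ ≤ ‖a‖)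
    (hσ : Continuous fun p : G × A => σ p.1 p.2) (hρ : Continuous (Units.val ∘ ρ))
    (hρM : ∀ s, ‖(↑(ρ s)⁻¹ : A)‖ ≤ M) (hρε : IsAlmostCocycle σ ε (Units.val ∘ ρ))
    (hε : 0 ≤ ε) (hεM : 16 * M ^ 2 * ε ≤ 1) (n : ℕ) :
    Continuous ((cocycleAverage σ μ)^[n] (Units.val ∘ ρ)) ∧
      (∀ s, ‖(cocycleAverage σ μ)^[n] (Units.val ∘ ρ) s - ρ s‖ ≤ 4 * M * ε * (1 - 2⁻¹ ^ n)) ∧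
      IsAlmostCocycle σ (ε * 2⁻¹ ^ n) ((cocycleAverage σ μ)^[n] (Units.val ∘ ρ)) := by
  induction n with
  | zero => simpa using ⟨hρ, hρε⟩
  | succ n ih =>
    obtain ⟨hvc, hvρ, hv⟩ := ih
    obtain ⟨hfc, hfv, hf⟩ := cocycleAverage_step μ hσn hσ hρM hε hεM (by positivity)
      (pow_le_one₀ (by norm_num) (by norm_num)) hvc hvρ hv
    rw [Function.iterate_succ_apply']
    refine ⟨hfc, fun s => ?_, hf.mono (le_of_eq (by ring))⟩
    set v := (cocycleAverage σ μ)^[n] (Units.val ∘ ρ)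
    calc _ ≤ ‖cocycleAverage σ μ v s - v s‖ + ‖v s - ρ s‖ := norm_sub_le_norm_sub_add_norm_sub _ _ _
      _ ≤ 2 * M * ε * 2⁻¹ ^ n + 4 * M * ε * (1 - 2⁻¹ ^ n) := add_le_add (hfv s) (hvρ s)
      _ = _ := by ring

theorem norm_iterate_cocycleAverage_succ_sub_le (hσn : ∀ s a, ‖σ s a‖ ≤ ‖a‖)
    (hσ : Continuous fun p : G × A => σ p.1 p.2) (hρ : Continuous (Units.val ∘ ρ))
    (hρM : ∀ s, ‖(↑(ρ s)⁻¹ : A)‖ ≤ M) (hρε : IsAlmostCocycle σ ε (Units.val ∘ ρ))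
    (hε : 0 ≤ ε) (hεM : 16 * M ^ 2 * ε ≤ 1) (n : ℕ) (s : G) :
    ‖(cocycleAverage σ μ)^[n + 1] (Units.val ∘ ρ) s - (cocycleAverage σ μ)^[n] (Units.val ∘ ρ) s‖
      ≤ 2 * M * ε * 2⁻¹ ^ n := by
  obtain ⟨hvc, hvρ, hv⟩ := iterate_cocycleAverage_spec μ hσn hσ hρ hρM hρε hε hεM n
  rw [Function.iterate_succ_apply']
  exact (cocycleAverage_step μ hσn hσ hρM hε hεM (by positivity)
    (pow_le_one₀ (by norm_num) (by norm_num)) hvc hvρ hv).2.1 s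

end Iteration

theorem eq_mul_act_of_tendsto {G A : Type*} [Group G] [NormedRing A] [NormedAlgebra ℝ A]
    {σ : G →* (A ≃ₐ[ℝ] A)} (hσ : ∀ s, Continuous (σ s)) {v : ℕ → G → A} {L : G → A}
    {e : ℕ → ℝ} (hvL : ∀ s, Tendsto (fun n => v n s) atTop (𝓝 (L s)))
    (he : Tendsto e atTop (𝓝 0)) (hv : ∀ n, IsAlmostCocycle σ (e n) (v n)) (s t : G) :
    L (s * t) = L s * σ s (L t) := by
  have hlim : Tendsto (fun n => v n s * σ s (v n t) - v n (s * t)) atTop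
      (𝓝 (L s * σ s (L t) - L (s * t))) :=
    ((hvL s).mul (((hσ s).tendsto _).comp (hvL t))).sub (hvL (s * t))
  have hzero : Tendsto (fun n => v n s * σ s (v n t) - v n (s * t)) atTop (𝓝 0) :=
    squeeze_zero_norm (fun n => hv n s t) he
  exact (sub_eq_zero.1 (tendsto_nhds_unique hlim hzero)).symm

theorem almost_cocycle_near_cocycle_units_general {G : Type*} [Group G] [TopologicalSpace G]
    [IsTopologicalGroup G] [CompactSpace G]
    {A : Type*} [NormedRing A] [CompleteSpace A] [NormedAlgebra ℝ A]
    (σ : G →* (A ≃ₐ[ℝ] A)) (hiso : ∀ s : G, Isometry (σ s))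
    (hσ : Continuous fun p : G × A => σ p.1 p.2)
    (M : ℝ) (hM : 1 ≤ M) (δ : ℝ) (hδ : 0 < δ) :
    ∃ ε > 0, ∀ ρ : G → Aˣ, Continuous ρ →
      (∀ s : G, ‖(ρ s : A)‖ ≤ M) → (∀ s : G, ‖(((ρ s)⁻¹ : Aˣ) : A)‖ ≤ M) →
      (∀ s t : G, ‖(ρ s : A) * σ s (ρ t : A) - (ρ (s * t) : A)‖ ≤ ε) →
      ∃ ρ' : G → Aˣ, Continuous ρ' ∧
        (∀ s t : G, (ρ' (s * t) : A) = (ρ' s : A) * σ s (ρ' t : A)) ∧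
        ∀ s : G, ‖(ρ' s : A) - (ρ s : A)‖ ≤ δ := by
  borelize G
  obtain ⟨μ, _, _⟩ := exists_isProbabilityMeasure_isMulLeftInvariant G
  have hσn : ∀ s a, ‖σ s a‖ ≤ ‖a‖ := fun s a => ((hiso s).norm_map_of_map_zero (map_zero _) a).le
  have hM₀ : 0 < M := by linarith
  set ε := min (δ / (4 * M)) (1 / (16 * M ^ 2))
  have hε : 0 < ε := by positivity
  have hεδ : 4 * M * ε ≤ δ := (le_div_iff₀' (by positivity)).1 (min_le_left _ _)
  have hεM : 16 * M ^ 2 * ε ≤ 1 := (le_div_iff₀' (by positivity)).1 (min_le_right _ _)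
  refine ⟨ε, hε, fun ρ hρ _ hρM hρε => ?_⟩
  have hρc : Continuous (Units.val ∘ ρ) := Units.continuous_val.comp hρ
  have hspec := iterate_cocycleAverage_spec μ hσn hσ hρc hρM hρε hε.le hεM
  obtain ⟨L, hvL, hLρ⟩ := exists_tendstoUniformly_of_norm_sub_le_geometric
    (v := fun n => (cocycleAverage σ μ)^[n] (Units.val ∘ ρ)) (r := 2⁻¹) (by norm_num)
    (by norm_num) (norm_iterate_cocycleAverage_succ_sub_le μ hσn hσ hρc hρM hρε hε.le hεM)
  have hLρ' : ∀ s, ‖L s - ρ s‖ ≤ 4 * M * ε := fun s => by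
    rw [norm_sub_rev]; exact (hLρ s).trans_eq (by ring)
  have hL : ∀ s, IsUnit (L s) := fun s => isUnit_of_norm_sub_mul_lt_one (ρ s) <| by
    nlinarith [mul_le_mul (hLρ' s) (hρM s) (norm_nonneg _) (by positivity)]
  refine ⟨fun s => (hL s).unit, ?_, eq_mul_act_of_tendsto
    (fun s => hσ.comp (Continuous.prodMk_right s)) (fun s => hvL.tendsto_at s) ?_
    (fun n => (hspec n).2.2), fun s => (hLρ' s).trans hεδ⟩
  · exact Units.isOpenEmbedding_val.continuous_iff.2
      (hvL.continuous (Frequently.of_forall fun n => (hspec n).1))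
  · simpa using (tendsto_pow_atTop_nhds_zero_of_lt_one (r := (2:ℝ)⁻¹) (by norm_num)
      (by norm_num)).const_mul ε

/-- (n = 1 case of the main theorem for `U = Aˣ`.) Let the compact group
`G` act on a real unital Banach algebra `A` by isometric unital algebra automorphisms,
with jointly continuous action map. For every `M ≥ 1` and `δ > 0` there is `ε > 0` such
that every continuous `ρ : G → Aˣ` with `‖ρ s‖ ≤ M`, `‖(ρ s)⁻¹‖ ≤ M` and cocycle defect
`‖ρ s * (s • ρ t) - ρ (s*t)‖ ≤ ε` is uniformly within `δ` of a continuous 1-cocycle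
`ρ' : G → Aˣ`, i.e. `ρ' (s*t) = ρ' s * (s • ρ' t)`. -/
theorem almost_cocycle_near_cocycle_units {G : Type*} [Group G] [TopologicalSpace G]
    [IsTopologicalGroup G] [CompactSpace G]
    {A : Type*} [NormedRing A] [NormOneClass A] [CompleteSpace A] [NormedAlgebra ℝ A]
    (σ : G →* (A ≃ₐ[ℝ] A)) (hiso : ∀ s : G, Isometry (σ s))
    (hσ : Continuous fun p : G × A => σ p.1 p.2)
    (M : ℝ) (hM : 1 ≤ M) (δ : ℝ) (hδ : 0 < δ) :
    ∃ ε > 0, ∀ ρ : G → Aˣ, Continuous ρ →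
      (∀ s : G, ‖(ρ s : A)‖ ≤ M) → (∀ s : G, ‖(((ρ s)⁻¹ : Aˣ) : A)‖ ≤ M) →
      (∀ s t : G, ‖(ρ s : A) * σ s (ρ t : A) - (ρ (s * t) : A)‖ ≤ ε) →
      ∃ ρ' : G → Aˣ, Continuous ρ' ∧
        (∀ s t : G, (ρ' (s * t) : A) = (ρ' s : A) * σ s (ρ' t : A)) ∧
        ∀ s : G, ‖(ρ' s : A) - (ρ s : A)‖ ≤ δ :=
  almost_cocycle_near_cocycle_units_general σ hiso hσ M hM δ hδ
end

section
/- Let G be a compact topological group acting on a real unital Banach algebra A by isometric unital algebra automorphisms, written (s, a) ↦ s • a, and let M ≥ 1. There exists a constant C > 0, depending only on M, with the following property: for every map ρ : G → Aˣ with ‖ρ(s)‖ ≤ M and ‖ρ(s)⁻¹‖ ≤ M for all s, every 0 < ε ≤ 1, and every map β : G × G → A with sup_{s,t} ‖β(s,t)‖ ≤ ε and exp(β(s,t)) = ρ(s) · (s • ρ(t)) · ρ(st)⁻¹ for all s, t ∈ G, one has, writing s ▷ x := ρ(s) · (s • x) · ρ(s)⁻¹, the estimate sup_{s,t,u ∈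 G} ‖ s ▷ β(t,u) − β(st, u) + β(s, tu) − β(s,t) ‖ ≤ C ε². -/
/-!
Put `a = s ▷ β(t,u)`, `b = β(s,tu)`, `c = β(s,t)`, `d = β(st,u)`. Expanding both sides through the
defining relation of `β`, the factors `ρ` telescope and `exp a * exp b = exp c * exp d`. Since
`exp x * exp y = 1 + x + y + O(r²)` for `‖x‖, ‖y‖ ≤ r ≤ 1`, this forces `a + b - c - d = O(r²)`,
and all four norms are at most `r = M²ε`.
-/

open NormedSpace

section ExpBounds

variable {A : Type*} [NormedRing A] [NormedAlgebra ℝ A] [CompleteSpace A]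

theorem norm_exp_sub_one_sub_le_real_exp (x : A) :
    ‖exp x - 1 - x‖ ≤ Real.exp ‖x‖ - 1 - ‖x‖ := by
  have hA := (hasSum_nat_add_iff' 2).mpr (exp_series_hasSum_exp' (𝕂 := ℝ) x)
  have hR := (hasSum_nat_add_iff' 2).mpr (exp_series_hasSum_exp' (𝕂 := ℝ) ‖x‖)
  rw [← Real.exp_eq_exp_ℝ] at hR
  simp only [Finset.sum_range_succ, Finset.sum_range_zero, Nat.factorial_zero, Nat.factorial_one,
    Nat.cast_one, inv_one, pow_zero, pow_one, one_smul, zero_add, ← sub_sub] at hA hR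
  refine hA.norm_le_of_bounded hR fun n => ?_
  rw [norm_smul, Real.norm_of_nonneg (by positivity), smul_eq_mul]
  gcongr
  exact norm_pow_le' x (by omega)

theorem norm_exp_sub_one_sub_le_sq {x : A} (hx : ‖x‖ ≤ 1) : ‖exp x - 1 - x‖ ≤ ‖x‖ ^ 2 :=
  (norm_exp_sub_one_sub_le_real_exp x).trans <|
    (le_abs_self _).trans (Real.abs_exp_sub_one_sub_id_le (by rwa [abs_norm]))

theorem norm_exp_mul_exp_sub_one_sub_sub_le {x y : A} {r : ℝ} (hx : ‖x‖ ≤ r) (hy : ‖y‖ ≤ r)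
    (hr : r ≤ 1) : ‖exp x * exp y - 1 - x - y‖ ≤ 6 * r ^ 2 := by
  have hr0 : 0 ≤ r := (norm_nonneg x).trans hx
  have quadratic {z : A} (hz : ‖z‖ ≤ r) : ‖exp z - 1 - z‖ ≤ r ^ 2 :=
    (norm_exp_sub_one_sub_le_sq (hz.trans hr)).trans (by gcongr)
  have linear {z : A} (hz : ‖z‖ ≤ r) : ‖exp z - 1‖ ≤ 2 * r := calc
    ‖exp z - 1‖ = ‖(exp z - 1 - z) + z‖ := by rw [sub_add_cancel]
    _ ≤ r ^ 2 + r := (norm_add_le _ _).trans (add_le_add (quadratic hz) hz)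
    _ ≤ 2 * r := by nlinarith
  calc ‖exp x * exp y - 1 - x - y‖
      = ‖(exp x - 1) * (exp y - 1) + (exp x - 1 - x) + (exp y - 1 - y)‖ := by
        congr 1; noncomm_ring
    _ ≤ ‖exp x - 1‖ * ‖exp y - 1‖ + ‖exp x - 1 - x‖ + ‖exp y - 1 - y‖ :=
        norm_add₃_le.trans (by gcongr; exact norm_mul_le _ _)
    _ ≤ (2 * r) * (2 * r) + r ^ 2 + r ^ 2 := by
        gcongr
        exacts [linear hx, linear hy, quadratic hx, quadratic hy]
    _ = 6 * r ^ 2 := by ring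

theorem norm_add_sub_sub_le_of_exp_mul_exp_eq {x y z w : A} {r : ℝ} (hx : ‖x‖ ≤ r)
    (hy : ‖y‖ ≤ r) (hz : ‖z‖ ≤ r) (hw : ‖w‖ ≤ r) (h : exp x * exp y = exp z * exp w) :
    ‖x + y - z - w‖ ≤ 12 * r ^ 2 := by
  rcases le_or_gt r 1 with hr | hr
  · calc ‖x + y - z - w‖
        = ‖(exp z * exp w - 1 - z - w) - (exp x * exp y - 1 - x - y)‖ := by
          rw [h]; congr 1; abel
      _ ≤ 6 * r ^ 2 + 6 * r ^ 2 :=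
          (norm_sub_le _ _).trans (add_le_add (norm_exp_mul_exp_sub_one_sub_sub_le hz hw hr)
            (norm_exp_mul_exp_sub_one_sub_sub_le hx hy hr))
      _ = 12 * r ^ 2 := by ring
  · calc ‖x + y - z - w‖ ≤ ‖x‖ + ‖y‖ + ‖z‖ + ‖w‖ :=
          (norm_sub_le _ _).trans <| add_le_add_left
            ((norm_sub_le _ _).trans <| add_le_add_left (norm_add_le _ _) _) _
      _ ≤ 12 * r ^ 2 := by nlinarith

end ExpBounds

theorem exp_conj_mul_exp_eq_exp_mul_exp {G A : Type*} [Group G] [NormedRing A]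
    [NormedAlgebra ℝ A] [CompleteSpace A]
    (σ : G →* (A ≃ₐ[ℝ] A)) (hσ : ∀ s, Continuous (σ s)) (ρ : G → Aˣ) (β : G → G → A)
    (hβ : ∀ s t, exp (β s t) = (ρ s : A) * σ s (ρ t : A) * ((ρ (s * t))⁻¹ : Aˣ)) (s t u : G) :
    exp ((ρ s : A) * σ s (β t u) * (((ρ s)⁻¹ : Aˣ) : A)) * exp (β s (t * u)) =
      exp (β s t) * exp (β (s * t) u) := by
  let : NormedAlgebra ℚ A := NormedAlgebra.restrictScalars ℚ ℝ A
  have cancel (x y z : A) (hxy : y * x = 1) : σ s y * (σ s x * z) = z := by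
    rw [← mul_assoc, ← map_mul, hxy, map_one, one_mul]
  rw [exp_units_conj, ← map_exp (σ s) (hσ s), hβ, hβ, hβ, hβ]
  simp only [map_mul σ, AlgEquiv.mul_apply, map_mul (σ s), mul_assoc,
    Units.inv_mul_cancel_left, cancel _ _ _ (Units.inv_mul _)]

theorem defect_is_almost_two_cocycle_general {G : Type*} [Group G]
    {A : Type*} [NormedRing A] [CompleteSpace A] [NormedAlgebra ℝ A]
    (σ : G →* (A ≃ₐ[ℝ] A)) (hiso : ∀ s : G, Isometry (σ s))
    (M : ℝ) (hM : 1 ≤ M) :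
    ∃ C : ℝ, 0 < C ∧
      ∀ ρ : G → Aˣ,
        (∀ s : G, ‖(ρ s : A)‖ ≤ M) → (∀ s : G, ‖(((ρ s)⁻¹ : Aˣ) : A)‖ ≤ M) →
        ∀ ε : ℝ, 0 < ε → ε ≤ 1 →
        ∀ β : G → G → A,
          (∀ s t : G, ‖β s t‖ ≤ ε) →
          (∀ s t : G,
            exp (β s t) = (ρ s : A) * σ s (ρ t : A) * ((ρ (s * t))⁻¹ : Aˣ)) →
          ∀ s t u : G,
            ‖(ρ s : A) * σ s (β t u) * (((ρ s)⁻¹ : Aˣ) : A)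
              - β (s * t) u + β s (t * u) - β s t‖ ≤ C * ε ^ 2 := by
  refine ⟨12 * M ^ 4, mul_pos (by norm_num) (pow_pos (zero_lt_one.trans_le hM) 4), ?_⟩
  intro ρ hρ hρinv ε hε _ β hβ hexp s t u
  have hεM : ε ≤ M ^ 2 * ε := le_mul_of_one_le_left hε.le (one_le_pow₀ hM)
  have hconj : ‖(ρ s : A) * σ s (β t u) * (((ρ s)⁻¹ : Aˣ) : A)‖ ≤ M ^ 2 * ε := calc
    _ ≤ ‖(ρ s : A)‖ * ‖σ s (β t u)‖ * ‖(((ρ s)⁻¹ : Aˣ) : A)‖ := norm_mul₃_le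
    _ ≤ M * ε * M := by
        rw [(hiso s).norm_map_of_map_zero (map_zero _)]
        gcongr
        exacts [hρ s, hβ t u, hρinv s]
    _ = M ^ 2 * ε := by ring
  have key := norm_add_sub_sub_le_of_exp_mul_exp_eq hconj ((hβ _ _).trans hεM)
    ((hβ _ _).trans hεM) ((hβ _ _).trans hεM)
    (exp_conj_mul_exp_eq_exp_mul_exp σ (fun s => (hiso s).continuous) ρ β hexp s t u)
  calc _ = ‖(ρ s : A) * σ s (β t u) * (((ρ s)⁻¹ : Aˣ) : A) + β s (t * u) - β s t
          - β (s * t) u‖ := by congr 1; abel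
    _ ≤ 12 * (M ^ 2 * ε) ^ 2 := key
    _ = 12 * M ^ 4 * ε ^ 2 := by ring

/-- Let the compact group `G` act on a real unital Banach algebra `A`
by isometric unital algebra automorphisms, and let `M ≥ 1`. There is a constant `C > 0`,
depending only on `M`, such that: whenever `ρ : G → Aˣ` satisfies `‖ρ s‖ ≤ M` and
`‖(ρ s)⁻¹‖ ≤ M`, `0 < ε ≤ 1`, and `β : G × G → A` satisfies `‖β s t‖ ≤ ε` and
`exp (β s t) = ρ s * (s • ρ t) * (ρ (s*t))⁻¹`, then, with
`s ▷ x := ρ s * (s • x) * (ρ s)⁻¹`, one has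
`‖s ▷ β t u - β (st) u + β s (tu) - β s t‖ ≤ C ε²` for all `s, t, u`. -/
theorem defect_is_almost_two_cocycle {G : Type*} [Group G] [TopologicalSpace G]
    [IsTopologicalGroup G] [CompactSpace G]
    {A : Type*} [NormedRing A] [NormOneClass A] [CompleteSpace A] [NormedAlgebra ℝ A]
    (σ : G →* (A ≃ₐ[ℝ] A)) (hiso : ∀ s : G, Isometry (σ s))
    (M : ℝ) (hM : 1 ≤ M) :
    ∃ C : ℝ, 0 < C ∧
      ∀ ρ : G → Aˣ,
        (∀ s : G, ‖(ρ s : A)‖ ≤ M) → (∀ s : G, ‖(((ρ s)⁻¹ : Aˣ) : A)‖ ≤ M) →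
        ∀ ε : ℝ, 0 < ε → ε ≤ 1 →
        ∀ β : G → G → A,
          (∀ s t : G, ‖β s t‖ ≤ ε) →
          (∀ s t : G,
            exp (β s t) = (ρ s : A) * σ s (ρ t : A) * ((ρ (s * t))⁻¹ : Aˣ)) →
          ∀ s t u : G,
            ‖(ρ s : A) * σ s (β t u) * (((ρ s)⁻¹ : Aˣ) : A)
              - β (s * t) u + β s (t * u) - β s t‖ ≤ C * ε ^ 2 :=
  defect_is_almost_two_cocycle_general σ hiso M hM
end
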